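/- Let A and B be real symmetric positive definite n×n matrices, b ∈ ℝⁿ, and let x* be the unique solution of A x = b. Suppose 0 < μ ≤ L are real numbers such that A − μ·B⁻¹ and L·B⁻¹ − A are positive semidefinite (equivalently, all eigenvalues of BA lie in [μ, L]). Set α = 4/(√L + √μ)² and β = ((√L − √μ)/(√L + √μ))². Let x⁰, x¹ ∈ ℝⁿ be arbitrary and define xᵏ⁺¹ = xᵏ + α·B(b − A xᵏ) + β(xᵏ − xᵏ⁻¹) for k ≥ 1. Then for every ε > 0 there is a constant C such that ‖xᵏ − x*‖ ≤ C·((√L − √μ)/(√L + √μ) + ε)ᵏ for all k; in particular, xᵏ converges to x*, with asymptotic rate at most (√κ − 1)/(√κ + 1) where κ = L/μ. -/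

import Mathlib

/-!
With `e k = x k - xstar`, the iteration reads `e (k + 2) = S (e (k + 1)) - β • e k` for
`S = (1 + β) - α • B * A`. In the inner product `⟪u, v⟫ = u ⬝ᵥ B⁻¹ *ᵥ v` the operator `B * A` is
symmetric with numerical range in `[μ, L]`, and Polyak's `α, β` are exactly the parameters for
which `‖S‖ ≤ 2ρ` with `ρ = √β = (√L - √μ) / (√L + √μ)`.

For symmetric `S` the energy `Q (u, v) = ‖v‖² - ⟪S u, v⟫ + β ‖u‖²` is multiplied by exactly `β`
along the iteration, and `Q (u, v) ≥ ‖v - S u / 2‖²` because `‖S u‖ ≤ 2ρ ‖u‖`. Hence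
`‖e (k + 1)‖ ≤ ρ ‖e k‖ + ρ ^ k √Q₀`, so `‖e k‖ = O(s ^ k)` for every `s > ρ`; the factor `k` of the
double root `ρ` is what forces the `ε`. Finally the `B⁻¹`-norm dominates a multiple of the
Euclidean norm.
-/

open Matrix
open scoped InnerProductSpace
open Filter Topology

section Polyak

noncomputable def polyakRate (L μ : ℝ) : ℝ := (√L - √μ) / (√L + √μ)

noncomputable def polyakStep (L μ : ℝ) : ℝ := 4 / (√L + √μ) ^ 2

variable {L μ : ℝ}

lemma polyakRate_nonneg (hμL : μ ≤ L) : 0 ≤ polyakRate L μ :=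
  div_nonneg (sub_nonneg.2 (Real.sqrt_le_sqrt hμL)) (by positivity)

lemma polyakRate_lt_one (hμ : 0 < μ) : polyakRate L μ < 1 := by
  have hsμ : 0 < √μ := Real.sqrt_pos.2 hμ
  rw [polyakRate, div_lt_one (by positivity)]
  linarith

lemma polyakStep_nonneg : 0 ≤ polyakStep L μ := by
  unfold polyakStep; positivity

lemma one_add_polyakRate_sq_sub_polyakStep_mul (hμ : 0 < μ) (hμL : μ ≤ L) :
    1 + polyakRate L μ ^ 2 - polyakStep L μ * μ = 2 * polyakRate L μ ∧
      1 + polyakRate L μ ^ 2 - polyakStep L μ * L = -(2 * polyakRate L μ) := by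
  have hsum : √L + √μ ≠ 0 := by positivity
  have key : ∀ a b : ℝ, a + b ≠ 0 →
      1 + ((a - b) / (a + b)) ^ 2 - 4 / (a + b) ^ 2 * b ^ 2 = 2 * ((a - b) / (a + b)) ∧
        1 + ((a - b) / (a + b)) ^ 2 - 4 / (a + b) ^ 2 * a ^ 2 = -(2 * ((a - b) / (a + b))) := by
    intro a b h
    constructor <;> field_simp <;> ring
  have := key (√L) (√μ) hsum
  rwa [Real.sq_sqrt hμ.le, Real.sq_sqrt (hμ.le.trans hμL)] at this

end Polyak

lemma le_mul_pow_of_le_mul_add_pow {N : ℕ → ℝ} {ρ s q : ℝ} (hρ : 0 ≤ ρ) (hρs : ρ < s)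
    (hq : 0 ≤ q) (hN₀ : 0 ≤ N 0) (hN : ∀ k, N (k + 1) ≤ ρ * N k + ρ ^ k * q) (k : ℕ) :
    N k ≤ (N 0 + q / (s - ρ)) * s ^ k := by
  have hsρ : 0 < s - ρ := sub_pos.2 hρs
  set D := N 0 + q / (s - ρ)
  have hD : q ≤ (s - ρ) * D := by
    rw [mul_add, mul_div_cancel₀ _ hsρ.ne']
    nlinarith
  induction k with
  | zero => simp only [pow_zero, mul_one]; linarith [div_nonneg hq hsρ.le]
  | succ k ih =>
    have hpow : ρ ^ k ≤ s ^ k := pow_le_pow_left₀ hρ hρs.le k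
    have hsk : 0 ≤ s ^ k := (pow_nonneg hρ k).trans hpow
    calc N (k + 1) ≤ ρ * N k + ρ ^ k * q := hN k
      _ ≤ ρ * (D * s ^ k) + s ^ k * q := by gcongr
      _ ≤ D * s ^ (k + 1) := by rw [pow_succ]; nlinarith [mul_le_mul_of_nonneg_left hD hsk]

section HeavyBallMap

variable {E : Type*} [AddCommGroup E] [Module ℝ E]

def heavyBallMap (α β : ℝ) (T : E →ₗ[ℝ] E) : E →ₗ[ℝ] E := (1 + β) • LinearMap.id - α • T

lemma heavyBallMap_apply (α β : ℝ) (T : E →ₗ[ℝ] E) (u : E) :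
    heavyBallMap α β T u = (1 + β) • u - α • T u := rfl

end HeavyBallMap

section InnerProductSpace

variable {E : Type*} [SeminormedAddCommGroup E] [InnerProductSpace ℝ E]

theorem LinearMap.IsSymmetric.norm_apply_le_of_abs_inner_le {S : E →ₗ[ℝ] E}
    (hS : S.IsSymmetric) {c : ℝ} (hc₀ : 0 ≤ c) (hc : ∀ x, |⟪S x, x⟫_ℝ| ≤ c * ‖x‖ ^ 2) (x : E) :
    ‖S x‖ ≤ c * ‖x‖ := by
  have hSS : ⟪S (S x), x⟫_ℝ = ‖S x‖ ^ 2 := by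
    rw [hS, real_inner_self_eq_norm_sq]
  -- polarization of `⟪S ·, ·⟫` at `x ± t • S x`
  have hquad : ∀ t : ℝ,
      0 ≤ (2 * c * ‖S x‖ ^ 2) * (t * t) + (-4 * ‖S x‖ ^ 2) * t + 2 * c * ‖x‖ ^ 2 := by
    intro t
    have hp := (abs_le.1 (hc (x + t • S x))).2
    have hm := (abs_le.1 (hc (x - t • S x))).1
    simp only [map_add, map_sub, map_smul, inner_add_left, inner_add_right, inner_sub_left,
      inner_sub_right, inner_smul_left, inner_smul_right, real_inner_self_eq_norm_sq,
      norm_add_sq_real, norm_sub_sq_real, norm_smul, real_inner_comm x (S x), hSS,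
      RCLike.conj_to_real, Real.norm_eq_abs, mul_pow, sq_abs] at hp hm
    nlinarith
  have hdisc := discrim_le_zero hquad
  rw [discrim] at hdisc
  by_contra! hlt
  have hpos : 0 < ‖S x‖ := lt_of_le_of_lt (by positivity) hlt
  nlinarith [mul_lt_mul'' hlt hlt (by positivity) (by positivity)]

lemma heavyBallMap_isSymmetric {T : E →ₗ[ℝ] E} (hT : T.IsSymmetric) (α β : ℝ) :
    (heavyBallMap α β T).IsSymmetric :=
  (LinearMap.IsSymmetric.id.smul RCLike.conj_to_real).sub
    (hT.smul RCLike.conj_to_real)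

variable {L μ : ℝ}

lemma norm_heavyBallMap_polyak_le {T : E →ₗ[ℝ] E} (hT : T.IsSymmetric) (hμ : 0 < μ)
    (hμL : μ ≤ L) (hlow : ∀ u, μ * ‖u‖ ^ 2 ≤ ⟪T u, u⟫_ℝ) (hup : ∀ u, ⟪T u, u⟫_ℝ ≤ L * ‖u‖ ^ 2)
    (u : E) :
    ‖heavyBallMap (polyakStep L μ) (polyakRate L μ ^ 2) T u‖ ≤ 2 * polyakRate L μ * ‖u‖ := by
  obtain ⟨hleft, hright⟩ := one_add_polyakRate_sq_sub_polyakStep_mul hμ hμL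
  have hα : 0 ≤ polyakStep L μ := polyakStep_nonneg
  refine (heavyBallMap_isSymmetric hT _ _).norm_apply_le_of_abs_inner_le
    (by linarith [polyakRate_nonneg hμL]) (fun x => ?_) u
  rw [heavyBallMap_apply, inner_sub_left, inner_smul_left, inner_smul_left,
    real_inner_self_eq_norm_sq, RCLike.conj_to_real, RCLike.conj_to_real, abs_le]
  constructor
  · nlinarith [mul_le_mul_of_nonneg_left (hup x) hα]
  · nlinarith [mul_le_mul_of_nonneg_left (hlow x) hα]

def heavyBallEnergy (S : E →ₗ[ℝ] E) (β : ℝ) (u v : E) : ℝ :=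
  ‖v‖ ^ 2 - ⟪S u, v⟫_ℝ + β * ‖u‖ ^ 2

lemma heavyBallEnergy_step {S : E →ₗ[ℝ] E} (hS : S.IsSymmetric) (β : ℝ) (u v : E) :
    heavyBallEnergy S β v (S v - β • u) = β * heavyBallEnergy S β u v := by
  have hsymm : ⟪S v, u⟫_ℝ = ⟪S u, v⟫_ℝ := by rw [hS, real_inner_comm]
  simp only [heavyBallEnergy, norm_sub_sq_real, inner_sub_right, inner_smul_right, norm_smul,
    real_inner_self_eq_norm_sq, hsymm, mul_pow, Real.norm_eq_abs, sq_abs]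
  ring

lemma norm_sub_half_sq_le_heavyBallEnergy {S : E →ₗ[ℝ] E} {ρ : ℝ}
    (hS : ∀ u, ‖S u‖ ≤ 2 * ρ * ‖u‖) (u v : E) :
    ‖v - (2 : ℝ)⁻¹ • S u‖ ^ 2 ≤ heavyBallEnergy S (ρ ^ 2) u v := by
  have hSu : ‖S u‖ ^ 2 ≤ (2 * ρ * ‖u‖) ^ 2 := pow_le_pow_left₀ (norm_nonneg _) (hS u) 2
  rw [heavyBallEnergy, norm_sub_sq_real, inner_smul_right, norm_smul, real_inner_comm]
  norm_num
  nlinarith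

lemma norm_le_add_sqrt_heavyBallEnergy {S : E →ₗ[ℝ] E} {ρ : ℝ}
    (hS : ∀ u, ‖S u‖ ≤ 2 * ρ * ‖u‖) (u v : E) :
    ‖v‖ ≤ ρ * ‖u‖ + √(heavyBallEnergy S (ρ ^ 2) u v) := by
  have hhalf : ‖(2 : ℝ)⁻¹ • S u‖ ≤ ρ * ‖u‖ := by
    rw [norm_smul]; norm_num; linarith [hS u]
  calc ‖v‖ = ‖(2 : ℝ)⁻¹ • S u + (v - (2 : ℝ)⁻¹ • S u)‖ := by rw [add_sub_cancel]
    _ ≤ ‖(2 : ℝ)⁻¹ • S u‖ + ‖v - (2 : ℝ)⁻¹ • S u‖ := norm_add_le _ _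
    _ ≤ ρ * ‖u‖ + √(heavyBallEnergy S (ρ ^ 2) u v) :=
      add_le_add hhalf (Real.le_sqrt_of_sq_le (norm_sub_half_sq_le_heavyBallEnergy hS u v))

theorem heavyBall_exists_norm_le_mul_pow {S : E →ₗ[ℝ] E} (hS : S.IsSymmetric) {ρ : ℝ}
    (hρ : 0 ≤ ρ) (hSρ : ∀ u, ‖S u‖ ≤ 2 * ρ * ‖u‖) {e : ℕ → E}
    (he : ∀ k, e (k + 2) = S (e (k + 1)) - ρ ^ 2 • e k) {s : ℝ} (hρs : ρ < s) :
    ∃ C, ∀ k, ‖e k‖ ≤ C * s ^ k := by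
  set Q := heavyBallEnergy S (ρ ^ 2) (e 0) (e 1)
  have henergy : ∀ k, heavyBallEnergy S (ρ ^ 2) (e k) (e (k + 1)) = (ρ ^ k) ^ 2 * Q := by
    intro k
    induction k with
    | zero => simp [Q]
    | succ k ih => rw [he, heavyBallEnergy_step hS, ih]; ring
  have hstep : ∀ k, ‖e (k + 1)‖ ≤ ρ * ‖e k‖ + ρ ^ k * √Q := fun k => by
    have := norm_le_add_sqrt_heavyBallEnergy hSρ (e k) (e (k + 1))
    rwa [henergy, Real.sqrt_mul (sq_nonneg _), Real.sqrt_sq (pow_nonneg hρ k)] at this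
  exact ⟨_, le_mul_pow_of_le_mul_add_pow hρ hρs (Real.sqrt_nonneg Q) (norm_nonneg _) hstep⟩

theorem heavyBall_polyak_exists_norm_le_mul_pow {T : E →ₗ[ℝ] E} (hT : T.IsSymmetric)
    (hμ : 0 < μ) (hμL : μ ≤ L) (hlow : ∀ u, μ * ‖u‖ ^ 2 ≤ ⟪T u, u⟫_ℝ)
    (hup : ∀ u, ⟪T u, u⟫_ℝ ≤ L * ‖u‖ ^ 2) {e : ℕ → E}
    (he : ∀ k, e (k + 2) = heavyBallMap (polyakStep L μ) (polyakRate L μ ^ 2) T (e (k + 1)) -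
      polyakRate L μ ^ 2 • e k) {s : ℝ} (hs : polyakRate L μ < s) :
    ∃ C, ∀ k, ‖e k‖ ≤ C * s ^ k :=
  heavyBall_exists_norm_le_mul_pow (heavyBallMap_isSymmetric hT _ _) (polyakRate_nonneg hμL)
    (norm_heavyBallMap_polyak_le hT hμ hμL hlow hup) he hs

end InnerProductSpace

namespace Matrix

variable {ι : Type*} [Fintype ι]

lemma IsSymm.dotProduct_mulVec_comm {M : Matrix ι ι ℝ} (hM : M.IsSymm) (u v : ι → ℝ) :
    u ⬝ᵥ M *ᵥ v = M *ᵥ u ⬝ᵥ v := by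
  rw [dotProduct_mulVec, ← mulVec_transpose, hM.eq]

theorem heavyBall_polyak_exists_sqrt_le_mul_pow [DecidableEq ι] {A B : Matrix ι ι ℝ}
    (hA : A.IsHermitian) (hB : B.PosDef) {μ L : ℝ} (hμ : 0 < μ) (hμL : μ ≤ L)
    (hlow : (A - μ • B⁻¹).PosSemidef) (hup : (L • B⁻¹ - A).PosSemidef) {e : ℕ → ι → ℝ}
    (he : ∀ k, e (k + 2) = heavyBallMap (polyakStep L μ) (polyakRate L μ ^ 2) (toLin' (B * A))
      (e (k + 1)) - polyakRate L μ ^ 2 • e k) {s : ℝ} (hs : polyakRate L μ < s) :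
    ∃ C, ∀ k, √(e k ⬝ᵥ B⁻¹ *ᵥ e k) ≤ C * s ^ k := by
  have hBinv : B⁻¹.PosSemidef := hB.inv.posSemidef
  -- `⟪u, v⟫ = u ⬝ᵥ B⁻¹ *ᵥ v`; a `‖u‖` typed in this proof would still elaborate to the sup norm
  -- of `ι → ℝ`, hence the facts below are stated with `⟪u, u⟫_ℝ`
  let _ := B⁻¹.toSeminormedAddCommGroup hBinv
  let _ := B⁻¹.toInnerProductSpace hBinv
  have hinner : ∀ u v : ι → ℝ, ⟪u, v⟫_ℝ = u ⬝ᵥ B⁻¹ *ᵥ v := fun u v => by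
    change (B⁻¹ *ᵥ v) ⬝ᵥ star u = _
    simp [dotProduct_comm]
  have hT : ∀ u v : ι → ℝ, ⟪toLin' (B * A) u, v⟫_ℝ = A *ᵥ u ⬝ᵥ v := fun u v => by
    rw [hinner, toLin'_apply, (isHermitian_iff_isSymm.1 hBinv.isHermitian).dotProduct_mulVec_comm,
      mulVec_mulVec, nonsing_inv_mul_cancel_left _ _ hB.det_pos.ne'.isUnit]
  have hsymm : (toLin' (B * A)).IsSymmetric := fun u v => by
    rw [real_inner_comm (toLin' (B * A) v), hT, hT, dotProduct_comm,
      (isHermitian_iff_isSymm.1 hA).dotProduct_mulVec_comm]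
  have hlow' : ∀ u, μ * ⟪u, u⟫_ℝ ≤ ⟪toLin' (B * A) u, u⟫_ℝ := fun u => by
    have := hlow.dotProduct_mulVec_nonneg u
    simp only [star_trivial, sub_mulVec, smul_mulVec, dotProduct_sub, dotProduct_smul,
      smul_eq_mul] at this
    rw [hT, hinner, dotProduct_comm (A *ᵥ u)]
    linarith
  have hup' : ∀ u, ⟪toLin' (B * A) u, u⟫_ℝ ≤ L * ⟪u, u⟫_ℝ := fun u => by
    have := hup.dotProduct_mulVec_nonneg u
    simp only [star_trivial, sub_mulVec, smul_mulVec, dotProduct_sub, dotProduct_smul,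
      smul_eq_mul] at this
    rw [hT, hinner, dotProduct_comm (A *ᵥ u)]
    linarith
  obtain ⟨C, hC⟩ := heavyBall_polyak_exists_norm_le_mul_pow hsymm hμ hμL
    (fun u => by rw [← real_inner_self_eq_norm_sq]; exact hlow' u)
    (fun u => by rw [← real_inner_self_eq_norm_sq]; exact hup' u) he hs
  refine ⟨C, fun k => ?_⟩
  rw [← hinner, ← norm_eq_sqrt_real_inner]
  exact hC k

lemma norm_toLp_sq_eq_dotProduct (v : ι → ℝ) :
    ‖(WithLp.toLp 2 v : EuclideanSpace ℝ ι)‖ ^ 2 = v ⬝ᵥ v := by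
  rw [← real_inner_self_eq_norm_sq, EuclideanSpace.inner_toLp_toLp, star_trivial]

lemma dotProduct_mulVec_le_norm_toEuclideanCLM_mul [DecidableEq ι] (M : Matrix ι ι ℝ)
    (u : ι → ℝ) : u ⬝ᵥ M *ᵥ u ≤ ‖toEuclideanCLM (n := ι) (𝕜 := ℝ) M‖ * (u ⬝ᵥ u) := by
  set T := toEuclideanCLM (n := ι) (𝕜 := ℝ) M
  set y : EuclideanSpace ℝ ι := WithLp.toLp 2 u
  calc u ⬝ᵥ M *ᵥ u = ⟪y, T y⟫_ℝ := (inner_toEuclideanCLM M _ _).symm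
    _ ≤ ‖y‖ * (‖T‖ * ‖y‖) := (real_inner_le_norm _ _).trans (by gcongr; exact T.le_opNorm y)
    _ = ‖T‖ * (u ⬝ᵥ u) := by rw [← norm_toLp_sq_eq_dotProduct]; ring

lemma PosDef.dotProduct_le_mul_dotProduct_inv_mulVec [DecidableEq ι] {B : Matrix ι ι ℝ}
    (hB : B.PosDef) (u : ι → ℝ) :
    u ⬝ᵥ u ≤ ‖toEuclideanCLM (n := ι) (𝕜 := ℝ) B‖ * (u ⬝ᵥ B⁻¹ *ᵥ u) := by
  have hBw : B *ᵥ (B⁻¹ *ᵥ u) = u := by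
    rw [mulVec_mulVec, mul_nonsing_inv _ hB.det_pos.ne'.isUnit, one_mulVec]
  have hcs := LinearMap.BilinForm.apply_mul_apply_le_of_forall_zero_le (toLinearMap₂' ℝ B)
    (fun x => by simpa [toLinearMap₂'_apply'] using hB.posSemidef.dotProduct_mulVec_nonneg x)
    u (B⁻¹ *ᵥ u)
  rw [toLinearMap₂'_apply', toLinearMap₂'_apply', toLinearMap₂'_apply', toLinearMap₂'_apply',
    hBw, (isHermitian_iff_isSymm.1 hB.isHermitian).dotProduct_mulVec_comm, hBw,
    dotProduct_comm (B⁻¹ *ᵥ u)] at hcs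
  have hBu := dotProduct_mulVec_le_norm_toEuclideanCLM_mul B u
  have huu : 0 ≤ u ⬝ᵥ u := by simpa using dotProduct_star_self_nonneg u
  have hinv : 0 ≤ u ⬝ᵥ B⁻¹ *ᵥ u := by simpa using hB.inv.posSemidef.dotProduct_mulVec_nonneg u
  rcases huu.eq_or_lt with h | h
  · rw [← h]; positivity
  · nlinarith [mul_le_mul_of_nonneg_right hBu hinv]

lemma tendsto_of_sqrt_dotProduct_sub_le {x : ℕ → ι → ℝ} {x₀ : ι → ℝ} {f : ℕ → ℝ}
    (hf : Tendsto f atTop (𝓝 0)) (hx : ∀ k, √((x k - x₀) ⬝ᵥ (x k - x₀)) ≤ f k) :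
    Tendsto x atTop (𝓝 x₀) := by
  have hlim : Tendsto (fun k => (WithLp.toLp 2 (x k) : EuclideanSpace ℝ ι)) atTop
      (𝓝 (WithLp.toLp 2 x₀)) := by
    refine tendsto_iff_norm_sub_tendsto_zero.2
      (squeeze_zero (fun _ => norm_nonneg _) (fun k => ?_) hf)
    have := hx k
    rwa [← norm_toLp_sq_eq_dotProduct, Real.sqrt_sq (norm_nonneg _), WithLp.toLp_sub] at this
  exact ((PiLp.continuous_ofLp 2 _).tendsto _).comp hlim

end Matrix

/-- Heavy ball method with Polyak's parameters applied to the preconditioned SPD linear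
system `A x = b`: for every `ε > 0` the Euclidean norm of the error decays like
`((√L - √μ)/(√L + √μ) + ε)^k`; in particular the iterates converge to the solution. -/
theorem heavy_ball_preconditioned_linear_convergence
    (n : ℕ) (A B : Matrix (Fin n) (Fin n) ℝ) (hA : A.PosDef) (hB : B.PosDef)
    (b xstar : Fin n → ℝ) (hxstar : A *ᵥ xstar = b)
    (μ L : ℝ) (hμ : 0 < μ) (hμL : μ ≤ L)
    (h1 : (A - μ • B⁻¹).PosSemidef) (h2 : (L • B⁻¹ - A).PosSemidef)
    (α β : ℝ)
    (hα : α = 4 / (Real.sqrt L + Real.sqrt μ) ^ 2)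
    (hβ : β = ((Real.sqrt L - Real.sqrt μ) / (Real.sqrt L + Real.sqrt μ)) ^ 2)
    (x : ℕ → Fin n → ℝ)
    (hrec : ∀ k : ℕ, 1 ≤ k →
      x (k + 1) = x k + α • (B *ᵥ (b - A *ᵥ x k)) + β • (x k - x (k - 1))) :
    (∀ ε > (0 : ℝ), ∃ C : ℝ, ∀ k : ℕ,
        Real.sqrt ((x k - xstar) ⬝ᵥ (x k - xstar)) ≤
          C * ((Real.sqrt L - Real.sqrt μ) / (Real.sqrt L + Real.sqrt μ) + ε) ^ k) ∧
      Filter.Tendsto x Filter.atTop (nhds xstar) := by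
  rw [show α = polyakStep L μ from hα, show β = polyakRate L μ ^ 2 from hβ] at hrec
  have herr : ∀ k, x (k + 2) - xstar = heavyBallMap (polyakStep L μ) (polyakRate L μ ^ 2)
      (toLin' (B * A)) (x (k + 1) - xstar) - polyakRate L μ ^ 2 • (x k - xstar) := fun k => by
    rw [hrec (k + 1) (Nat.le_add_left 1 k), Nat.add_sub_cancel, heavyBallMap_apply, toLin'_apply,
      ← hxstar, ← mulVec_mulVec]
    simp only [mulVec_sub]
    module
  have hdecay : ∀ ε > (0 : ℝ), ∃ C : ℝ, ∀ k : ℕ,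
      √((x k - xstar) ⬝ᵥ (x k - xstar)) ≤ C * (polyakRate L μ + ε) ^ k := by
    intro ε hε
    obtain ⟨C, hC⟩ := heavyBall_polyak_exists_sqrt_le_mul_pow hA.isHermitian hB hμ hμL h1 h2
      (e := fun k => x k - xstar) herr (lt_add_of_pos_right _ hε)
    set c := √‖toEuclideanCLM (n := Fin n) (𝕜 := ℝ) B‖
    refine ⟨c * C, fun k => ?_⟩
    calc √((x k - xstar) ⬝ᵥ (x k - xstar))
        ≤ c * √((x k - xstar) ⬝ᵥ B⁻¹ *ᵥ (x k - xstar)) := by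
          rw [← Real.sqrt_mul (norm_nonneg _)]
          exact Real.sqrt_le_sqrt (hB.dotProduct_le_mul_dotProduct_inv_mulVec _)
      _ ≤ c * (C * (polyakRate L μ + ε) ^ k) := by gcongr; exact hC k
      _ = c * C * (polyakRate L μ + ε) ^ k := by ring
  refine ⟨hdecay, ?_⟩
  have hρ : polyakRate L μ < 1 := polyakRate_lt_one hμ
  obtain ⟨C, hC⟩ := hdecay ((1 - polyakRate L μ) / 2) (by linarith)
  refine tendsto_of_sqrt_dotProduct_sub_le ?_ hC
  simpa using (tendsto_pow_atTop_nhds_zero_of_lt_one (by linarith [polyakRate_nonneg hμL])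
    (by linarith)).const_mul C
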